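/- Let σ > 1, n ≥ 1, b ∈ ℝ, and let j, k ∈ ℕ. There exist constants C > 0 and c > 0 such that for all t > 0 and all ξ ∈ ℝⁿ with ‖ξ‖^(2σ) ≥ 5, the k-th iterated derivative within U of the function ξ ↦ λ₁(ξ) e^{λ₂(ξ)t} λ₂(ξ)^j ‖ξ‖^b / (λ₁(ξ) − λ₂(ξ)) satisfies ‖D^k(·)(ξ)‖ ≤ C e^{−ct} ‖ξ‖^{2σj + b − 2σ − k}. -/

import Mathlib

noncomputable section

variable {n : ℕ}

/-- `r(ξ) = ‖ξ‖^(2σ)`. -/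
def rr (σ : ℝ) (ξ : EuclideanSpace ℝ (Fin n)) : ℝ := ‖ξ‖ ^ (2 * σ)

/-- First (real) characteristic root `λ₁(ξ) = (−r(ξ) + √(r(ξ)² − 4r(ξ)))/2`. -/
def lam1R (σ : ℝ) (ξ : EuclideanSpace ℝ (Fin n)) : ℝ :=
  (-(rr σ ξ) + Real.sqrt ((rr σ ξ) ^ 2 - 4 * rr σ ξ)) / 2

/-- Second (real) characteristic root `λ₂(ξ) = (−r(ξ) − √(r(ξ)² − 4r(ξ)))/2`. -/
def lam2R (σ : ℝ) (ξ : EuclideanSpace ℝ (Fin n)) : ℝ :=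
  (-(rr σ ξ) - Real.sqrt ((rr σ ξ) ^ 2 - 4 * rr σ ξ)) / 2

/-!
With `s = ‖ξ‖²`, `r = s ^ σ` and `φ y = √(1 - 4y)`, the roots are `λ₁ = -2 / (1 + φ (r⁻¹))` and
`λ₂ = -r (1 + φ (r⁻¹)) / 2`, and `λ₁ - λ₂ = r φ (r⁻¹)`. Hence the function is `G(‖ξ‖²)` with
`G(s) = s ^ γ H(s ^ (-σ)) exp (t λ₂(s))` (`kernelSq`), where `γ = σ j + b/2 - σ` and
`H = rootsProfile j` is smooth on `y < 1/4`, while `s ^ (-σ)` stays in the compact `[0, 1/5]`.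

The factors satisfy symbol estimates `|∂ⁱ u(s)| ≲ s ^ (α - i)`, which survive products (Leibniz)
and composition with a function whose derivatives are bounded on a compact set (Faà di Bruno).
The exponential satisfies them with an extra factor `exp (-t s^σ / 4)`: the powers of `t s^σ`
produced by differentiation are absorbed by half of the decay `exp (t λ₂) ≤ exp (-t s^σ / 2)`.
Finally `ξ ↦ G(‖ξ‖²)` is estimated by Faà di Bruno once more, after a rescaling that makes the
inner function equal to `1` at `ξ`.
-/

open Set Real
open scoped ContDiff Nat

lemma one_add_pow_le_mul_exp (k : ℕ) {x : ℝ} (hx : 0 ≤ x) :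
    (1 + x) ^ k ≤ (4 * k + 1) ^ k * exp (x / 4) := by
  have hc : (0 : ℝ) < 4 * k + 1 := by positivity
  calc (1 + x) ^ k ≤ ((4 * k + 1) * (x / (4 * k + 1) + 1)) ^ k := by
        gcongr
        rw [mul_add, mul_div_cancel₀ _ hc.ne']
        nlinarith [(Nat.cast_nonneg k : (0:ℝ) ≤ k)]
    _ ≤ ((4 * k + 1) * exp (x / (4 * k + 1))) ^ k := by gcongr; exact add_one_le_exp _
    _ = (4 * k + 1) ^ k * exp (k * (x / (4 * k + 1))) := by rw [mul_pow, exp_nat_mul]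
    _ ≤ (4 * k + 1) ^ k * exp (x / 4) := by
        gcongr
        rw [← mul_div_assoc, div_le_div_iff₀ hc (by norm_num)]
        nlinarith

def SymbolBoundAt (Ω : Set ℝ) (k : ℕ) (A α : ℝ) (u : ℝ → ℝ) (s : ℝ) : Prop :=
  ∀ i ≤ k, ‖iteratedFDerivWithin ℝ i u Ω s‖ ≤ A * s ^ (α - i)

namespace SymbolBoundAt

variable {Ω : Set ℝ} {k : ℕ} {A B α β p s : ℝ} {u v ℓ : ℝ → ℝ}

lemma nonneg (h : SymbolBoundAt Ω k A α u s) (hs : 0 < s) : 0 ≤ A :=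
  nonneg_of_mul_nonneg_left ((norm_nonneg _).trans (h 0 k.zero_le)) (rpow_pos_of_pos hs _)

lemma mono_const (h : SymbolBoundAt Ω k A α u s) (hs : 0 < s) (hAB : A ≤ B) :
    SymbolBoundAt Ω k B α u s := fun i hi =>
  (h i hi).trans (mul_le_mul_of_nonneg_right hAB (rpow_nonneg hs.le _))

lemma mono_order (h : SymbolBoundAt Ω k A α u s) (hs : 1 ≤ s) (hαβ : α ≤ β) :
    SymbolBoundAt Ω k A β u s := fun i hi =>
  (h i hi).trans (mul_le_mul_of_nonneg_left
    (rpow_le_rpow_of_exponent_le hs (by linarith)) (h.nonneg (by linarith)))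

lemma order_zero (h : SymbolBoundAt Ω k A α u s) (hs : 0 < s) :
    SymbolBoundAt Ω k (A * s ^ α) 0 u s := fun i hi => by
  rw [mul_assoc, ← rpow_add hs, show α + (0 - (i : ℝ)) = α - i by ring]
  exact h i hi

lemma const_mul (h : SymbolBoundAt Ω k A α u s) (hΩ : UniqueDiffOn ℝ Ω)
    (hu : ContDiffOn ℝ ∞ u Ω) (hs : s ∈ Ω) (c : ℝ) :
    SymbolBoundAt Ω k (|c| * A) α (fun x => c * u x) s := fun i hi => by
  rw [show (fun x => c * u x) = c • u from rfl, iteratedFDerivWithin_const_smul_apply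
    ((hu.contDiffWithinAt hs).of_le (by exact_mod_cast le_top)) hΩ hs, norm_smul,
    Real.norm_eq_abs, mul_assoc]
  exact mul_le_mul_of_nonneg_left (h i hi) (abs_nonneg c)

lemma mul (h₁ : SymbolBoundAt Ω k A α u s) (h₂ : SymbolBoundAt Ω k B β v s)
    (hΩ : UniqueDiffOn ℝ Ω) (hu : ContDiffOn ℝ ∞ u Ω) (hv : ContDiffOn ℝ ∞ v Ω) (hs : s ∈ Ω)
    (hs0 : 0 < s) :
    SymbolBoundAt Ω k (2 ^ k * A * B) (α + β) (fun x => u x * v x) s := by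
  intro i hi
  have hA := h₁.nonneg hs0
  have hB := h₂.nonneg hs0
  have hterm : ∀ m ∈ Finset.range (i + 1), (i.choose m : ℝ) * ‖iteratedFDerivWithin ℝ m u Ω s‖ *
      ‖iteratedFDerivWithin ℝ (i - m) v Ω s‖ ≤ i.choose m * (A * B * s ^ (α + β - i)) := by
    intro m hm
    have hmi : m ≤ i := Finset.mem_range_succ_iff.mp hm
    have hsplit : s ^ (α - m) * s ^ (β - (i - m : ℕ)) = s ^ (α + β - i) := by
      rw [← rpow_add hs0, Nat.cast_sub hmi]; ring_nf
    calc _ ≤ (i.choose m : ℝ) * (A * s ^ (α - m)) * (B * s ^ (β - (i - m : ℕ))) := by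
          gcongr
          · exact h₁ m (hmi.trans hi)
          · exact h₂ _ ((Nat.sub_le i m).trans hi)
      _ = _ := by rw [← hsplit]; ring
  calc ‖iteratedFDerivWithin ℝ i (fun x => u x * v x) Ω s‖
      ≤ ∑ m ∈ Finset.range (i + 1), (i.choose m : ℝ) * ‖iteratedFDerivWithin ℝ m u Ω s‖ *
          ‖iteratedFDerivWithin ℝ (i - m) v Ω s‖ :=
        norm_iteratedFDerivWithin_mul_le hu hv hΩ hs (by exact_mod_cast le_top)
    _ ≤ ∑ m ∈ Finset.range (i + 1), (i.choose m : ℝ) * (A * B * s ^ (α + β - i)) :=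
        Finset.sum_le_sum hterm
    _ = 2 ^ i * A * B * s ^ (α + β - i) := by
        rw [← Finset.sum_mul, ← Nat.cast_sum, Nat.sum_range_choose]; push_cast; ring
    _ ≤ 2 ^ k * A * B * s ^ (α + β - i) := by gcongr; norm_num

lemma comp {W : Set ℝ} {g : ℝ → ℝ} {M : ℝ} (h : SymbolBoundAt Ω k A 0 u s)
    (hW : UniqueDiffOn ℝ W) (hΩ : UniqueDiffOn ℝ Ω) (hg : ContDiffOn ℝ ∞ g W)
    (hu : ContDiffOn ℝ ∞ u Ω) (hmaps : MapsTo u Ω W) (hs : s ∈ Ω) (hs0 : 0 < s)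
    (hM : ∀ i ≤ k, ‖iteratedFDerivWithin ℝ i g W (u s)‖ ≤ M) :
    SymbolBoundAt Ω k (k ! * M * max 1 A ^ k) 0 (g ∘ u) s := by
  set K := max 1 A
  have hM0 : 0 ≤ M := (norm_nonneg _).trans (hM 0 k.zero_le)
  have hK : 1 ≤ K := le_max_left _ _
  intro i hi
  have hD : ∀ m, 1 ≤ m → m ≤ i → ‖iteratedFDerivWithin ℝ m u Ω s‖ ≤ (K * s⁻¹) ^ m := by
    intro m hm1 hmi
    calc _ ≤ A * s ^ ((0:ℝ) - m) := h m (hmi.trans hi)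
      _ ≤ K ^ m * (s⁻¹) ^ m := by
          rw [zero_sub, rpow_neg hs0.le, rpow_natCast, inv_pow]
          gcongr
          exact (le_max_right 1 A).trans (le_self_pow₀ hK (by omega))
      _ = (K * s⁻¹) ^ m := (mul_pow _ _ _).symm
  calc _ ≤ i ! * M * (K * s⁻¹) ^ i :=
        norm_iteratedFDerivWithin_comp_le hg hu (by exact_mod_cast le_top) hW hΩ hmaps hs
          (fun m hm => hM m (hm.trans hi)) hD
    _ = i ! * M * K ^ i * s ^ ((0:ℝ) - i) := by
        rw [zero_sub, rpow_neg hs0.le, rpow_natCast, mul_pow, inv_pow]; ring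
    _ ≤ k ! * M * K ^ k * s ^ ((0:ℝ) - i) := by
        gcongr

lemma exp_const_mul (h : SymbolBoundAt Ω k A p ℓ s) (hΩ : UniqueDiffOn ℝ Ω)
    (hℓ : ContDiffOn ℝ ∞ ℓ Ω) (hs : s ∈ Ω) (hs0 : 0 < s) {t : ℝ} (ht : 0 ≤ t)
    (hneg : ℓ s ≤ -(s ^ p) / 2) :
    SymbolBoundAt Ω k (k ! * (max 1 A * (4 * k + 1)) ^ k * exp (-(t * s ^ p) / 4)) 0
      (fun x => exp (t * ℓ x)) s := by
  set x := t * s ^ p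
  have hx : 0 ≤ x := by positivity
  have hinner : SymbolBoundAt Ω k (x * A) 0 (fun y => t * ℓ y) s := by
    have := (h.const_mul hΩ hℓ hs t).order_zero hs0
    rwa [abs_of_nonneg ht, mul_right_comm] at this
  have hexp : ∀ i ≤ k, ‖iteratedFDerivWithin ℝ i exp univ (t * ℓ s)‖ ≤ exp (-x / 2) := by
    intro i _
    rw [iteratedFDerivWithin_univ, norm_iteratedFDeriv_eq_norm_iteratedDeriv,
      iteratedDeriv_eq_iterate, iter_deriv_exp, norm_of_nonneg (exp_pos _).le]
    gcongr
    nlinarith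
  have hK : max 1 (x * A) ≤ max 1 A * (1 + x) := by
    refine max_le ?_ ?_
    · nlinarith [le_max_left 1 A]
    · nlinarith [le_max_left 1 A, le_max_right 1 A]
  refine (hinner.comp uniqueDiffOn_univ hΩ contDiff_exp.contDiffOn
    (contDiffOn_const.mul hℓ) (mapsTo_univ _ _) hs hs0 hexp).mono_const hs0 ?_
  calc (k ! : ℝ) * exp (-x / 2) * max 1 (x * A) ^ k
      ≤ k ! * exp (-x / 2) * (max 1 A ^ k * (1 + x) ^ k) := by
        rw [← mul_pow]; gcongr
    _ ≤ k ! * exp (-x / 2) * (max 1 A ^ k * ((4 * k + 1) ^ k * exp (x / 4))) := by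
        gcongr; exact one_add_pow_le_mul_exp k hx
    _ = _ := by
        rw [mul_pow]
        have : exp (-x / 2) * exp (x / 4) = exp (-x / 4) := by rw [← exp_add]; ring_nf
        linear_combination (k ! : ℝ) * max 1 A ^ k * (4 * k + 1) ^ k * this

end SymbolBoundAt

section NormSq

variable {E : Type*} [NormedAddCommGroup E] [InnerProductSpace ℝ E]

lemma ContinuousLinearMap.norm_iteratedFDeriv_mul_pow_le {F : Type*} [NormedAddCommGroup F]
    [NormedSpace ℝ F] (L : E →L[ℝ] F) (i : ℕ) (x : E) :
    ‖iteratedFDeriv ℝ i L x‖ * ‖x‖ ^ i ≤ ‖L‖ * ‖x‖ := by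
  have hL : fderiv ℝ L = fun _ => L := funext fun _ => L.fderiv
  rcases i with _ | _ | i
  · simpa using L.le_opNorm x
  · rw [← norm_iteratedFDeriv_fderiv, hL, norm_iteratedFDeriv_zero, pow_one]
  · rw [← norm_iteratedFDeriv_fderiv, hL, iteratedFDeriv_const_of_ne i.succ_ne_zero]
    simp only [Pi.zero_apply, norm_zero, zero_mul]
    positivity

lemma norm_iteratedFDeriv_norm_sq_mul_pow_le (i : ℕ) (ξ : E) :
    ‖iteratedFDeriv ℝ i (fun ζ : E => ‖ζ‖ ^ 2) ξ‖ * ‖ξ‖ ^ i ≤ 2 ^ i * ‖ξ‖ ^ 2 := by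
  rcases i with _ | i
  · simp
  have hd : fderiv ℝ (fun ζ : E => ‖ζ‖ ^ 2) = ⇑(2 • innerSL ℝ : E →L[ℝ] E →L[ℝ] ℝ) :=
    funext fun x => (hasStrictFDerivAt_norm_sq x).hasFDerivAt.fderiv
  have h2 : ‖(2 • innerSL ℝ : E →L[ℝ] E →L[ℝ] ℝ)‖ ≤ 2 :=
    two_nsmul (innerSL ℝ : E →L[ℝ] E →L[ℝ] ℝ) ▸ (norm_add_le (E := E →L[ℝ] E →L[ℝ] ℝ) _ _).trans
      (by linarith [norm_innerSL_le ℝ (E := E)])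
  rw [← norm_iteratedFDeriv_fderiv, hd, pow_succ, ← mul_assoc]
  calc _ ≤ ‖(2 • innerSL ℝ : E →L[ℝ] E →L[ℝ] ℝ)‖ * ‖ξ‖ * ‖ξ‖ :=
        mul_le_mul_of_nonneg_right
          (ContinuousLinearMap.norm_iteratedFDeriv_mul_pow_le _ i ξ) (norm_nonneg ξ)
    _ ≤ 2 * ‖ξ‖ * ‖ξ‖ := by gcongr
    _ ≤ 2 ^ (i + 1) * ‖ξ‖ ^ 2 := by
        have : (1 : ℝ) ≤ 2 ^ i := one_le_pow₀ (by norm_num)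
        rw [pow_succ]
        nlinarith [sq_nonneg ‖ξ‖]

lemma norm_iteratedFDerivWithin_comp_norm_sq_le {f : ℝ → ℝ} {Ω : Set ℝ} {k : ℕ} {A γ : ℝ} {ξ : E}
    (hΩ : IsOpen Ω) (hf : ContDiffOn ℝ ∞ f Ω) (hξ : ξ ≠ 0) (hξΩ : ‖ξ‖ ^ 2 ∈ Ω)
    (hA : SymbolBoundAt Ω k A γ f (‖ξ‖ ^ 2)) :
    ‖iteratedFDerivWithin ℝ k (fun ζ => f (‖ζ‖ ^ 2)) ((fun ζ : E => ‖ζ‖ ^ 2) ⁻¹' Ω) ξ‖ ≤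
      k ! * 2 ^ k * A * ‖ξ‖ ^ (2 * γ - k) := by
  have hρ : 0 < ‖ξ‖ := norm_pos_iff.mpr hξ
  set c := ‖ξ‖ ^ 2 with hc_def
  have hc : 0 < c := by positivity
  -- Rescale so that the inner function equals `1` at `ξ` and has derivatives `≲ ‖ξ‖⁻ⁱ`.
  set L : ℝ →L[ℝ] ℝ := c • ContinuousLinearMap.id ℝ ℝ
  have hLapp : ∀ y, L y = c * y := fun _ => rfl
  have hLnorm : ‖L‖ ≤ c := by
    simp only [L, norm_smul, Real.norm_of_nonneg hc.le]
    exact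
      (mul_le_mul_of_nonneg_left ContinuousLinearMap.norm_id_le hc.le).trans_eq (mul_one c)
  set q : E → ℝ := fun ζ => c⁻¹ * ‖ζ‖ ^ 2
  have hT : IsOpen (L ⁻¹' Ω) := hΩ.preimage L.continuous
  have hS : IsOpen ((fun ζ : E => ‖ζ‖ ^ 2) ⁻¹' Ω) := hΩ.preimage (by fun_prop)
  have hfun : (fun ζ => f (‖ζ‖ ^ 2)) = (f ∘ L) ∘ q := by
    funext ζ; simp [q, hLapp, hc.ne']
  have hq : q ξ = 1 := inv_mul_cancel₀ hc.ne'
  have houter : ∀ i ≤ k, ‖iteratedFDerivWithin ℝ i (f ∘ L) (L ⁻¹' Ω) (q ξ)‖ ≤ A * c ^ γ := by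
    intro i hi
    have hL1 : L 1 ∈ Ω := by simpa [hLapp] using hξΩ
    rw [hq, L.iteratedFDerivWithin_comp_right hf hΩ.uniqueDiffOn hT.uniqueDiffOn hL1
      (by exact_mod_cast le_top)]
    calc _ ≤ ‖iteratedFDerivWithin ℝ i f Ω (L 1)‖ * ∏ _ : Fin i, ‖L‖ :=
          ContinuousMultilinearMap.norm_compContinuousLinearMap_le _ _
      _ ≤ A * c ^ (γ - i) * c ^ i := by
          rw [Finset.prod_const, Finset.card_univ, Fintype.card_fin, hLapp, mul_one]
          gcongr
          exacts [(norm_nonneg _).trans (hA i hi), hA i hi]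
      _ = A * c ^ γ := by rw [rpow_sub_natCast hc.ne']; field_simp
  have hinner : ∀ i, 1 ≤ i → i ≤ k →
      ‖iteratedFDerivWithin ℝ i q ((fun ζ : E => ‖ζ‖ ^ 2) ⁻¹' Ω) ξ‖ ≤ (2 / ‖ξ‖) ^ i := by
    intro i _ _
    rw [iteratedFDerivWithin_of_isOpen i hS hξΩ, show q = c⁻¹ • fun ζ : E => ‖ζ‖ ^ 2 from rfl,
      iteratedFDeriv_const_smul_apply (contDiff_norm_sq ℝ).contDiffAt, norm_smul,
      norm_inv, Real.norm_of_nonneg hc.le, div_pow, le_div_iff₀ (by positivity), mul_assoc,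
      inv_mul_le_iff₀ hc]
    exact (norm_iteratedFDeriv_norm_sq_mul_pow_le i ξ).trans_eq (mul_comm _ _)
  rw [hfun]
  calc _ ≤ k ! * (A * c ^ γ) * (2 / ‖ξ‖) ^ k :=
        norm_iteratedFDerivWithin_comp_le (hf.comp_continuousLinearMap L)
          ((contDiff_const.mul (contDiff_norm_sq ℝ)).contDiffOn) (by exact_mod_cast le_top)
          hT.uniqueDiffOn hS.uniqueDiffOn (fun ζ hζ => by simpa [q, hLapp, hc.ne'] using hζ)
          hξΩ houter hinner
    _ = k ! * 2 ^ k * A * ‖ξ‖ ^ (2 * γ - k) := by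
        rw [hc_def, ← rpow_natCast ‖ξ‖ 2, ← rpow_mul hρ.le, rpow_sub_natCast hρ.ne', div_pow]
        push_cast
        ring

end NormSq

def IsSymbol (Ω R : Set ℝ) (α : ℝ) (u : ℝ → ℝ) : Prop :=
  ContDiffOn ℝ ∞ u Ω ∧ ∀ k : ℕ, ∃ A, ∀ s ∈ R, SymbolBoundAt Ω k A α u s

namespace IsSymbol

variable {Ω R : Set ℝ} {α β : ℝ} {u v : ℝ → ℝ}

lemma rpow (hΩ : IsOpen Ω) (hΩ0 : Ω ⊆ Ioi 0) (hR : R ⊆ Ω) (β : ℝ) :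
    IsSymbol Ω R β (fun s => s ^ β) := by
  refine ⟨fun s hs => (contDiffAt_rpow_const_of_ne (hΩ0 hs).ne').contDiffWithinAt, fun k => ?_⟩
  refine ⟨∑ i ∈ Finset.range (k + 1), |(descPochhammer ℝ i).eval β|, fun s hs i hi => ?_⟩
  have hs0 : 0 < s := hΩ0 (hR hs)
  rw [norm_iteratedFDerivWithin_eq_norm_iteratedDerivWithin,
    iteratedDerivWithin_of_isOpen hΩ (hR hs), iteratedDeriv_eq_iterate, iter_deriv_rpow_const,
    norm_mul, Real.norm_eq_abs, Real.norm_of_nonneg (rpow_nonneg hs0.le _)]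
  gcongr
  exact Finset.single_le_sum (f := fun i => |(descPochhammer ℝ i).eval β|)
    (fun _ _ => abs_nonneg _) (Finset.mem_range_succ_iff.mpr hi)

lemma mul (hu : IsSymbol Ω R α u) (hv : IsSymbol Ω R β v) (hΩ : UniqueDiffOn ℝ Ω)
    (hR : R ⊆ Ω) (hR0 : R ⊆ Ioi 0) : IsSymbol Ω R (α + β) (fun s => u s * v s) := by
  refine ⟨hu.1.mul hv.1, fun k => ?_⟩
  obtain ⟨A, hA⟩ := hu.2 k
  obtain ⟨B, hB⟩ := hv.2 k
  exact ⟨2 ^ k * A * B, fun s hs =>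
    (hA s hs).mul (hB s hs) hΩ hu.1 hv.1 (hR hs) (hR0 hs)⟩

lemma mono_order (hu : IsSymbol Ω R α u) (hR : R ⊆ Ici 1) (hαβ : α ≤ β) :
    IsSymbol Ω R β u := by
  refine ⟨hu.1, fun k => ?_⟩
  obtain ⟨A, hA⟩ := hu.2 k
  exact ⟨A, fun s hs => (hA s hs).mono_order (hR hs) hαβ⟩

lemma comp {W K : Set ℝ} {g : ℝ → ℝ} (hu : IsSymbol Ω R 0 u) (hΩ : UniqueDiffOn ℝ Ω)
    (hR : R ⊆ Ω) (hR0 : R ⊆ Ioi 0) (hW : IsOpen W) (hg : ContDiffOn ℝ ∞ g W)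
    (hK : IsCompact K) (hKW : K ⊆ W) (hΩW : MapsTo u Ω W) (hRK : MapsTo u R K) :
    IsSymbol Ω R 0 (g ∘ u) := by
  refine ⟨hg.comp hu.1 hΩW, fun k => ?_⟩
  obtain ⟨A, hA⟩ := hu.2 k
  have hcont : ContinuousOn
      (fun y => ∑ i ∈ Finset.range (k + 1), ‖iteratedFDerivWithin ℝ i g W y‖) K :=
    (continuousOn_finsetSum _ fun i _ =>
      (hg.continuousOn_iteratedFDerivWithin (by exact_mod_cast le_top) hW.uniqueDiffOn).norm).mono
      hKW
  obtain ⟨M, hM⟩ := hK.exists_bound_of_continuousOn hcont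
  refine ⟨k ! * M * max 1 A ^ k, fun s hs => (hA s hs).comp hW.uniqueDiffOn hΩ hg hu.1 hΩW
    (hR hs) (hR0 hs) fun i hi => ?_⟩
  refine le_trans ?_ ((le_abs_self _).trans (hM _ (hRK hs)))
  exact Finset.single_le_sum (f := fun i => ‖iteratedFDerivWithin ℝ i g W (u s)‖)
    (fun _ _ => norm_nonneg _) (Finset.mem_range_succ_iff.mpr hi)

lemma exp_const_mul {p : ℝ} {ℓ : ℝ → ℝ} (hℓ : IsSymbol Ω R p ℓ) (hΩ : UniqueDiffOn ℝ Ω)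
    (hR : R ⊆ Ω) (hR0 : R ⊆ Ioi 0) (hneg : ∀ s ∈ R, ℓ s ≤ -(s ^ p) / 2) (k : ℕ) :
    ∃ A, ∀ t, 0 ≤ t → ∀ s ∈ R,
      SymbolBoundAt Ω k (A * exp (-(t * s ^ p) / 4)) 0 (fun x => exp (t * ℓ x)) s := by
  obtain ⟨A, hA⟩ := hℓ.2 k
  exact ⟨k ! * (max 1 A * (4 * k + 1)) ^ k, fun t ht s hs =>
    (hA s hs).exp_const_mul hΩ hℓ.1 (hR hs) (hR0 hs) ht (hneg s hs)⟩

end IsSymbol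

/-- In the variable `s = ‖ξ‖²`, the set `U` becomes `rootsDomain σ` and the region
`‖ξ‖ ^ (2σ) ≥ 5` becomes `rootsRegion σ`. -/
def rootsDomain (σ : ℝ) : Set ℝ := {s | 0 < s ∧ 4 < s ^ σ}

def rootsRegion (σ : ℝ) : Set ℝ := {s | 0 < s ∧ 5 ≤ s ^ σ}

def discSqrt (y : ℝ) : ℝ := √(1 - 4 * y)

def lam2Sq (σ s : ℝ) : ℝ := s ^ σ * (-(1 + discSqrt (s ^ (-σ))) / 2)

def rootsProfile (j : ℕ) (y : ℝ) : ℝ :=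
  -2 / (1 + discSqrt y) * (-(1 + discSqrt y) / 2) ^ j / discSqrt y

def kernelSq (σ b : ℝ) (j : ℕ) (t s : ℝ) : ℝ :=
  s ^ (σ * j + b / 2 - σ) * rootsProfile j (s ^ (-σ)) * exp (t * lam2Sq σ s)

section Roots

variable {σ : ℝ}

lemma isOpen_rootsDomain : IsOpen (rootsDomain σ) :=
  ContinuousOn.isOpen_inter_preimage
    (fun s hs => (continuousAt_rpow_const s σ (Or.inl (ne_of_gt hs))).continuousWithinAt)
    isOpen_Ioi isOpen_Ioi

lemma rootsDomain_subset_Ioi : rootsDomain σ ⊆ Ioi 0 := fun _ hs => hs.1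

lemma rootsRegion_subset_rootsDomain : rootsRegion σ ⊆ rootsDomain σ :=
  fun _ hs => ⟨hs.1, by linarith [hs.2]⟩

lemma rootsRegion_subset_Ioi : rootsRegion σ ⊆ Ioi 0 := fun _ hs => hs.1

lemma rootsRegion_subset_Ici_one (hσ : 0 < σ) : rootsRegion σ ⊆ Ici 1 := by
  intro s hs
  by_contra h
  have := rpow_lt_one hs.1.le (not_le.mp h) hσ
  linarith [hs.2]

lemma discSqrt_pos {y : ℝ} (hy : y < 1 / 4) : 0 < discSqrt y :=
  sqrt_pos.mpr (by linarith)

lemma contDiffOn_discSqrt : ContDiffOn ℝ ∞ discSqrt (Iio (1 / 4)) :=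
  (contDiffOn_const.sub (contDiffOn_const.mul contDiffOn_id)).sqrt
    fun y (hy : y < 1 / 4) => by simp only [id]; linarith

lemma isSymbol_comp_rpow_neg (hσ : 0 < σ) {g : ℝ → ℝ}
    (hg : ContDiffOn ℝ ∞ g (Iio (1 / 4))) :
    IsSymbol (rootsDomain σ) (rootsRegion σ) 0 (fun s => g (s ^ (-σ))) := by
  have hu := (IsSymbol.rpow isOpen_rootsDomain rootsDomain_subset_Ioi
    rootsRegion_subset_rootsDomain (-σ)).mono_order (rootsRegion_subset_Ici_one hσ)
    (show -σ ≤ 0 by linarith)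
  refine hu.comp isOpen_rootsDomain.uniqueDiffOn rootsRegion_subset_rootsDomain
    rootsRegion_subset_Ioi isOpen_Iio hg (isCompact_Icc (a := 0) (b := 1 / 5))
    (fun y hy => by simp only [mem_Iio]; linarith [hy.2]) (fun s hs => ?_) (fun s hs => ?_) <;>
    dsimp only
  · rw [mem_Iio, rpow_neg hs.1.le, one_div]
    exact inv_strictAnti₀ (by norm_num) hs.2
  · rw [rpow_neg hs.1.le]
    exact ⟨inv_nonneg.mpr (by linarith [hs.2]), by rw [one_div]; exact inv_anti₀ (by norm_num) hs.2⟩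

lemma isSymbol_lam2Sq (hσ : 0 < σ) : IsSymbol (rootsDomain σ) (rootsRegion σ) σ (lam2Sq σ) := by
  have := (IsSymbol.rpow isOpen_rootsDomain rootsDomain_subset_Ioi
    rootsRegion_subset_rootsDomain σ).mul
    (isSymbol_comp_rpow_neg hσ (g := fun y => -(1 + discSqrt y) / 2)
      ((contDiffOn_const.add contDiffOn_discSqrt).neg.div_const 2))
    isOpen_rootsDomain.uniqueDiffOn rootsRegion_subset_rootsDomain rootsRegion_subset_Ioi
  rwa [add_zero] at this

lemma lam2Sq_le {s : ℝ} (hs : 0 ≤ s) : lam2Sq σ s ≤ -(s ^ σ) / 2 := by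
  have := mul_nonneg (rpow_nonneg hs σ) (sqrt_nonneg (1 - 4 * s ^ (-σ)))
  rw [lam2Sq, discSqrt]
  linarith

lemma contDiffOn_rootsProfile (j : ℕ) : ContDiffOn ℝ ∞ (rootsProfile j) (Iio (1 / 4)) := by
  have h1 : ContDiffOn ℝ ∞ (fun y => 1 + discSqrt y) (Iio (1 / 4)) :=
    contDiffOn_const.add contDiffOn_discSqrt
  exact ((contDiffOn_const.div h1 fun y hy => by linarith [discSqrt_pos hy]).mul
    ((h1.neg.div_const 2).pow j)).div contDiffOn_discSqrt fun y hy => (discSqrt_pos hy).ne'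

lemma isSymbol_rpow_mul_rootsProfile (hσ : 0 < σ) (b : ℝ) (j : ℕ) :
    IsSymbol (rootsDomain σ) (rootsRegion σ) (σ * j + b / 2 - σ)
      (fun s => s ^ (σ * j + b / 2 - σ) * rootsProfile j (s ^ (-σ))) := by
  have := (IsSymbol.rpow isOpen_rootsDomain rootsDomain_subset_Ioi
    rootsRegion_subset_rootsDomain (σ * j + b / 2 - σ)).mul
    (isSymbol_comp_rpow_neg hσ (contDiffOn_rootsProfile j))
    isOpen_rootsDomain.uniqueDiffOn rootsRegion_subset_rootsDomain rootsRegion_subset_Ioi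
  rwa [add_zero] at this

lemma contDiffOn_kernelSq (hσ : 0 < σ) (b t : ℝ) (j : ℕ) :
    ContDiffOn ℝ ∞ (kernelSq σ b j t) (rootsDomain σ) :=
  (isSymbol_rpow_mul_rootsProfile hσ b j).1.mul (contDiffOn_const.mul (isSymbol_lam2Sq hσ).1).exp

lemma kernelSq_symbolBound (hσ : 0 < σ) (b : ℝ) (j k : ℕ) :
    ∃ C, ∀ t, 0 ≤ t → ∀ s ∈ rootsRegion σ,
      SymbolBoundAt (rootsDomain σ) k (C * exp (-(5 / 4) * t)) (σ * j + b / 2 - σ)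
        (kernelSq σ b j t) s := by
  obtain ⟨A, hA⟩ := (isSymbol_rpow_mul_rootsProfile hσ b j).2 k
  obtain ⟨B, hB⟩ := (isSymbol_lam2Sq hσ).exp_const_mul isOpen_rootsDomain.uniqueDiffOn
    rootsRegion_subset_rootsDomain rootsRegion_subset_Ioi (fun s hs => lam2Sq_le hs.1.le) k
  refine ⟨2 ^ k * A * B, fun t ht s hs => ?_⟩
  have hprod := (hA s hs).mul (hB t ht s hs) isOpen_rootsDomain.uniqueDiffOn
    (isSymbol_rpow_mul_rootsProfile hσ b j).1 (contDiffOn_const.mul (isSymbol_lam2Sq hσ).1).exp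
    (rootsRegion_subset_rootsDomain hs) hs.1
  rw [add_zero] at hprod
  refine hprod.mono_const hs.1 ?_
  have hA0 := (hA s hs).nonneg hs.1
  have hB0 : 0 ≤ B := nonneg_of_mul_nonneg_left ((hB t ht s hs).nonneg hs.1) (exp_pos _)
  rw [← mul_assoc]
  gcongr
  nlinarith [hs.2]

section Discriminant

variable {r : ℝ}

lemma sqrt_sq_sub_four_mul_eq (hr : 4 < r) : √(r ^ 2 - 4 * r) = r * discSqrt r⁻¹ := by
  have hr0 : 0 < r := by linarith
  rw [discSqrt, ← sqrt_sq hr0.le, ← sqrt_mul (sq_nonneg r), sqrt_sq hr0.le]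
  congr 1
  field_simp

lemma neg_add_sqrt_div_two_eq (hr : 4 < r) :
    (-r + √(r ^ 2 - 4 * r)) / 2 = -2 / (1 + discSqrt r⁻¹) := by
  have hr0 : 0 < r := by linarith
  have hy : r⁻¹ < 1 / 4 := by rw [one_div]; exact inv_strictAnti₀ (by norm_num) hr
  have hφ := discSqrt_pos hy
  have hφsq : discSqrt r⁻¹ ^ 2 = 1 - 4 * r⁻¹ := sq_sqrt (by linarith)
  rw [sqrt_sq_sub_four_mul_eq hr, eq_div_iff (by linarith)]
  field_simp at hφsq ⊢
  linear_combination hφsq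

end Discriminant

lemma rr_eq_rpow (σ : ℝ) (ξ : EuclideanSpace ℝ (Fin n)) : rr σ ξ = (‖ξ‖ ^ 2) ^ σ := by
  rw [rr, ← rpow_natCast, ← rpow_mul (norm_nonneg ξ)]
  norm_num

lemma setOf_four_lt_rr (hσ : 0 < σ) :
    {ξ : EuclideanSpace ℝ (Fin n) | 4 < rr σ ξ} = (fun ζ => ‖ζ‖ ^ 2) ⁻¹' rootsDomain σ := by
  ext ξ
  change 4 < rr σ ξ ↔ 0 < ‖ξ‖ ^ 2 ∧ 4 < (‖ξ‖ ^ 2) ^ σ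
  rw [rr_eq_rpow]
  refine ⟨fun h => ⟨?_, h⟩, And.right⟩
  by_contra h0
  rw [le_antisymm (not_lt.mp h0) (by positivity), zero_rpow hσ.ne'] at h
  linarith

lemma roots_expr_eq_kernelSq (b t : ℝ) (j : ℕ) {ζ : EuclideanSpace ℝ (Fin n)}
    (hζ : ‖ζ‖ ^ 2 ∈ rootsDomain σ) :
    lam1R σ ζ * exp (lam2R σ ζ * t) * lam2R σ ζ ^ j * ‖ζ‖ ^ b / (lam1R σ ζ - lam2R σ ζ) =
      kernelSq σ b j t (‖ζ‖ ^ 2) := by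
  obtain ⟨hs, h4⟩ := hζ
  have hr := rr_eq_rpow σ ζ
  have hφ := discSqrt_pos (y := ((‖ζ‖ ^ 2) ^ σ)⁻¹)
    (by rw [one_div]; exact inv_strictAnti₀ (by norm_num) h4)
  have h1 : lam1R σ ζ = -2 / (1 + discSqrt ((‖ζ‖ ^ 2) ^ σ)⁻¹) := by
    rw [lam1R, hr, neg_add_sqrt_div_two_eq h4]
  have h2 : lam2R σ ζ = (‖ζ‖ ^ 2) ^ σ * (-(1 + discSqrt ((‖ζ‖ ^ 2) ^ σ)⁻¹) / 2) := by
    rw [lam2R, hr, sqrt_sq_sub_four_mul_eq h4]; ring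
  have h12 : lam1R σ ζ - lam2R σ ζ = (‖ζ‖ ^ 2) ^ σ * discSqrt ((‖ζ‖ ^ 2) ^ σ)⁻¹ := by
    rw [lam1R, lam2R, hr, ← sqrt_sq_sub_four_mul_eq h4]; ring
  have hb : ‖ζ‖ ^ b = (‖ζ‖ ^ 2) ^ (b / 2) := by
    rw [← rpow_natCast, ← rpow_mul (norm_nonneg ζ)]; ring_nf
  have hγ : (‖ζ‖ ^ 2) ^ (σ * j + b / 2 - σ) =
      ((‖ζ‖ ^ 2) ^ σ) ^ j * (‖ζ‖ ^ 2) ^ (b / 2) / (‖ζ‖ ^ 2) ^ σ := by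
    rw [rpow_sub hs, rpow_add hs, rpow_mul hs.le, rpow_natCast]
  rw [h12, h1, h2, kernelSq, lam2Sq, rootsProfile, rpow_neg hs.le, hγ, hb, mul_pow]
  field_simp

end Roots

theorem stmt_10_general (σ : ℝ) (hσ : 1 < σ) (n : ℕ) (b : ℝ) (j k : ℕ) :
    ∃ C c : ℝ, 0 < C ∧ 0 < c ∧
      ∀ (t : ℝ), 0 < t → ∀ ξ : EuclideanSpace ℝ (Fin n), 5 ≤ ‖ξ‖ ^ (2 * σ) →
        ‖iteratedFDerivWithin ℝ k
            (fun ξ : EuclideanSpace ℝ (Fin n) =>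
              lam1R σ ξ * Real.exp (lam2R σ ξ * t) * lam2R σ ξ ^ j * ‖ξ‖ ^ b /
                (lam1R σ ξ - lam2R σ ξ))
            {ξ : EuclideanSpace ℝ (Fin n) | 4 < rr σ ξ} ξ‖ ≤
          C * Real.exp (-c * t) * ‖ξ‖ ^ (2 * σ * j + b - 2 * σ - k) := by
  have hσ0 : 0 < σ := by linarith
  obtain ⟨C, hC⟩ := kernelSq_symbolBound hσ0 b j k
  refine ⟨max 1 (k ! * 2 ^ k * C), 5 / 4, by positivity, by norm_num, fun t ht ξ hξ => ?_⟩
  have hξΩ : ξ ∈ (fun ζ => ‖ζ‖ ^ 2) ⁻¹' rootsDomain σ := by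
    rw [← setOf_four_lt_rr hσ0]
    exact (by norm_num : (4 : ℝ) < 5).trans_le hξ
  have hξR : ‖ξ‖ ^ 2 ∈ rootsRegion σ := ⟨hξΩ.1, by rwa [← rr_eq_rpow]⟩
  have hξ0 : ξ ≠ 0 := by
    have := hξΩ.1
    rintro rfl
    simp at this
  rw [setOf_four_lt_rr hσ0,
    iteratedFDerivWithin_congr (f := fun ζ => kernelSq σ b j t (‖ζ‖ ^ 2))
      (s := (fun ζ => ‖ζ‖ ^ 2) ⁻¹' rootsDomain σ)
      (fun ζ hζ => roots_expr_eq_kernelSq b t j hζ) hξΩ]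
  calc _ ≤ k ! * 2 ^ k * (C * exp (-(5 / 4) * t)) * ‖ξ‖ ^ (2 * (σ * j + b / 2 - σ) - k) :=
        norm_iteratedFDerivWithin_comp_norm_sq_le isOpen_rootsDomain
          (contDiffOn_kernelSq hσ0 b t j) hξ0 hξΩ (hC t ht.le _ hξR)
    _ ≤ _ := by
        rw [show 2 * (σ * j + b / 2 - σ) - k = 2 * σ * j + b - 2 * σ - k by ring, ← mul_assoc]
        gcongr
        exact le_max_right _ _

/-- estimate (2.1.14), `|∂^α(λ₁ e^{λ₂ t} λ₂^j |ξ|^b/(λ₁−λ₂))| ≲ e^{−ct}|ξ|^{2σj+b−2σ−|α|}`. -/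
theorem stmt_10 (σ : ℝ) (hσ : 1 < σ) (n : ℕ) (hn : 1 ≤ n) (b : ℝ) (j k : ℕ) :
    ∃ C c : ℝ, 0 < C ∧ 0 < c ∧
      ∀ (t : ℝ), 0 < t → ∀ ξ : EuclideanSpace ℝ (Fin n), 5 ≤ ‖ξ‖ ^ (2 * σ) →
        ‖iteratedFDerivWithin ℝ k
            (fun ξ : EuclideanSpace ℝ (Fin n) =>
              lam1R σ ξ * Real.exp (lam2R σ ξ * t) * lam2R σ ξ ^ j * ‖ξ‖ ^ b /
                (lam1R σ ξ - lam2R σ ξ))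
            {ξ : EuclideanSpace ℝ (Fin n) | 4 < rr σ ξ} ξ‖ ≤
          C * Real.exp (-c * t) * ‖ξ‖ ^ (2 * σ * j + b - 2 * σ - k) :=
  stmt_10_general σ hσ n b j k
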